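/- (Generalized thermal iff product-preserving with full-rank states) A unitary U on a finite-dimensional bipartite Hilbert space satisfies U(α⊗β)U† = α'⊗β' for some full-rank density operators α, β, α', β' (with at least one of α, β not maximally mixed) if and only if there exist Hermitian operators H_A, H_B, H_A', H_B' (with H_A or H_B not proportional to the identity) such that U(H_A⊗𝟙 + 𝟙⊗H_B)U† = H_A'⊗𝟙 + 𝟙⊗H_B'. -/

import Mathlib

/-!
Take `H = log α` in one direction and the Gibbs state `α = e^H / Tr e^H` in the other. Both
`log` and `exp` commute with unitary conjugation, and they exchange Kronecker products of
positive definite matrices with Kronecker sums `A ⊗ 1 + 1 ⊗ B`, because the two summands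
commute. A Hermitian `H` is scalar exactly when its Gibbs state is the maximally mixed state.
-/

open Matrix Kronecker ComplexOrder NormedSpace
open scoped Matrix.Norms.L2Operator MatrixOrder

namespace Matrix

variable {n m : Type*} [DecidableEq n] [DecidableEq m]

theorem IsHermitian.kroneckerSum {R : Type*} [CommSemiring R] [StarRing R] {A : Matrix n n R}
    {B : Matrix m m R} (hA : A.IsHermitian) (hB : B.IsHermitian) :
    (A ⊗ₖ (1 : Matrix m m R) + (1 : Matrix n n R) ⊗ₖ B).IsHermitian := by
  simp only [IsHermitian, conjTranspose_add, conjTranspose_kronecker, conjTranspose_one, hA.eq,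
    hB.eq]

variable [Fintype n] [Fintype m]

variable (m) in
noncomputable def kroneckerOneAlgHom : Matrix n n ℂ →ₐ[ℂ] Matrix (n × m) (n × m) ℂ where
  toFun A := A ⊗ₖ (1 : Matrix m m ℂ)
  map_one' := one_kronecker_one
  map_mul' A B := by rw [← mul_kronecker_mul, one_mul]
  map_zero' := zero_kronecker 1
  map_add' A B := add_kronecker A B 1
  commutes' r := by simp [Algebra.algebraMap_eq_smul_one, smul_kronecker]

variable (n) in
noncomputable def oneKroneckerAlgHom : Matrix m m ℂ →ₐ[ℂ] Matrix (n × m) (n × m) ℂ where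
  toFun B := (1 : Matrix n n ℂ) ⊗ₖ B
  map_one' := one_kronecker_one
  map_mul' A B := by rw [← mul_kronecker_mul, one_mul]
  map_zero' := kronecker_zero 1
  map_add' A B := kronecker_add 1 A B
  commutes' r := by simp [Algebra.algebraMap_eq_smul_one, kronecker_smul]

theorem exp_kronecker_one (A : Matrix n n ℂ) :
    exp (A ⊗ₖ (1 : Matrix m m ℂ)) = exp A ⊗ₖ (1 : Matrix m m ℂ) :=
  let : NormedAlgebra ℚ (Matrix n n ℂ) := .restrictScalars ℚ ℂ _
  (map_exp (kroneckerOneAlgHom m) (LinearMap.continuous_of_finiteDimensional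
    (kroneckerOneAlgHom m).toLinearMap) A).symm

theorem exp_one_kronecker (B : Matrix m m ℂ) :
    exp ((1 : Matrix n n ℂ) ⊗ₖ B) = (1 : Matrix n n ℂ) ⊗ₖ exp B :=
  let : NormedAlgebra ℚ (Matrix m m ℂ) := .restrictScalars ℚ ℂ _
  (map_exp (oneKroneckerAlgHom n) (LinearMap.continuous_of_finiteDimensional
    (oneKroneckerAlgHom n).toLinearMap) B).symm

theorem exp_kroneckerSum (A : Matrix n n ℂ) (B : Matrix m m ℂ) :
    exp (A ⊗ₖ (1 : Matrix m m ℂ) + (1 : Matrix n n ℂ) ⊗ₖ B) = exp A ⊗ₖ exp B := by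
  have hcomm : Commute (A ⊗ₖ (1 : Matrix m m ℂ)) ((1 : Matrix n n ℂ) ⊗ₖ B) := by
    simp only [Commute, SemiconjBy, ← mul_kronecker_mul, mul_one, one_mul]
  rw [Matrix.exp_add_of_commute _ _ hcomm, exp_kronecker_one, exp_one_kronecker,
    ← mul_kronecker_mul, mul_one, one_mul]

theorem exp_unitary_conj {U : Matrix n n ℂ} (hU : U ∈ unitaryGroup n ℂ) (A : Matrix n n ℂ) :
    exp (U * A * Uᴴ) = U * exp A * Uᴴ :=
  exp_units_conj (Unitary.toUnits ⟨U, hU⟩) A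

theorem IsHermitian.posDef_exp {H : Matrix n n ℂ} (hH : H.IsHermitian) :
    (NormedSpace.exp H).PosDef :=
  (nonneg_iff_posSemidef.mp (IsSelfAdjoint.exp_nonneg hH)).posDef_iff_isUnit.mpr (isUnit_exp H)

theorem log_kronecker {α : Matrix n n ℂ} {β : Matrix m m ℂ} (hα : α.PosDef) (hβ : β.PosDef) :
    CFC.log (α ⊗ₖ β) = CFC.log α ⊗ₖ (1 : Matrix m m ℂ) + (1 : Matrix n n ℂ) ⊗ₖ CFC.log β := by
  conv_lhs => rw [← CFC.exp_log α hα.isStrictlyPositive, ← CFC.exp_log β hβ.isStrictlyPositive,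
    ← exp_kroneckerSum]
  exact CFC.log_exp _ (IsHermitian.kroneckerSum IsSelfAdjoint.log IsSelfAdjoint.log)

theorem log_unitary_conj {U : Matrix n n ℂ} (hU : U ∈ unitaryGroup n ℂ) {A : Matrix n n ℂ}
    (hA : A.PosDef) : CFC.log (U * A * Uᴴ) = U * CFC.log A * Uᴴ := by
  conv_lhs => rw [← CFC.exp_log A hA.isStrictlyPositive, ← exp_unitary_conj hU]
  exact CFC.log_exp _ (isHermitian_mul_mul_conjTranspose U IsSelfAdjoint.log)

noncomputable def gibbsState (H : Matrix n n ℂ) : Matrix n n ℂ := (exp H).trace⁻¹ • exp H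

theorem gibbsState_log {α : Matrix n n ℂ} (hα : α.PosDef) (htr : α.trace = 1) :
    gibbsState (CFC.log α) = α := by
  rw [gibbsState, CFC.exp_log α hα.isStrictlyPositive, htr, inv_one, one_smul]

theorem gibbsState_kroneckerSum (A : Matrix n n ℂ) (B : Matrix m m ℂ) :
    gibbsState (A ⊗ₖ (1 : Matrix m m ℂ) + (1 : Matrix n n ℂ) ⊗ₖ B) =
      gibbsState A ⊗ₖ gibbsState B := by
  rw [gibbsState, gibbsState, gibbsState, exp_kroneckerSum, trace_kronecker, mul_inv,
    smul_kronecker, kronecker_smul, smul_smul]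

theorem gibbsState_unitary_conj {U : Matrix n n ℂ} (hU : U ∈ unitaryGroup n ℂ)
    (H : Matrix n n ℂ) : gibbsState (U * H * Uᴴ) = U * gibbsState H * Uᴴ := by
  rw [gibbsState, gibbsState, exp_unitary_conj hU, trace_mul_cycle, ← star_eq_conjTranspose,
    mem_unitaryGroup_iff'.mp hU, one_mul, Matrix.mul_smul, Matrix.smul_mul]

theorem gibbsState_smul_one (c : ℂ) :
    gibbsState (c • (1 : Matrix n n ℂ)) = ((Fintype.card n : ℂ))⁻¹ • (1 : Matrix n n ℂ) := by
  have hexp : exp (c • (1 : Matrix n n ℂ)) = exp c • 1 := by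
    rw [← Algebra.algebraMap_eq_smul_one, ← algebraMap_exp_comm, Algebra.algebraMap_eq_smul_one]
  have hc : exp c ≠ 0 := Complex.exp_eq_exp_ℂ ▸ Complex.exp_ne_zero c
  rw [gibbsState, hexp, trace_smul, trace_one, smul_smul, smul_eq_mul]
  congr 1
  field_simp

variable [Nonempty n]

theorem IsHermitian.posDef_gibbsState {H : Matrix n n ℂ} (hH : H.IsHermitian) :
    (gibbsState H).PosDef :=
  hH.posDef_exp.smul (inv_pos.mpr hH.posDef_exp.trace_pos)

theorem IsHermitian.trace_gibbsState {H : Matrix n n ℂ} (hH : H.IsHermitian) :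
    (gibbsState H).trace = 1 := by
  rw [gibbsState, trace_smul, smul_eq_mul, inv_mul_cancel₀ hH.posDef_exp.trace_pos.ne']

theorem IsHermitian.gibbsState_eq_smul_one_iff {H : Matrix n n ℂ} (hH : H.IsHermitian) :
    gibbsState H = ((Fintype.card n : ℂ))⁻¹ • (1 : Matrix n n ℂ) ↔ ∃ c : ℂ, H = c • 1 := by
  refine ⟨fun h => ?_, fun ⟨c, hc⟩ => hc ▸ gibbsState_smul_one c⟩
  obtain ⟨r, -, htr⟩ := RCLike.pos_iff_exists_ofReal.mp hH.posDef_exp.trace_pos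
  have hexp : NormedSpace.exp H = algebraMap ℝ (Matrix n n ℂ) (r / Fintype.card n) := by
    rw [gibbsState, inv_smul_eq_iff₀ hH.posDef_exp.trace_pos.ne', smul_smul] at h
    rw [h, Algebra.algebraMap_eq_smul_one, ← Complex.coe_smul, ← htr]
    simp [div_eq_mul_inv]
  refine ⟨(Real.log (r / Fintype.card n) : ℂ), ?_⟩
  rw [← CFC.log_exp H hH, hexp, CFC.log_algebraMap, Algebra.algebraMap_eq_smul_one]
  exact (Complex.coe_smul _ _).symm

theorem PosDef.exists_log_eq_smul_one_iff {α : Matrix n n ℂ} (hα : α.PosDef) (htr : α.trace = 1) :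
    (∃ c : ℂ, CFC.log α = c • 1) ↔ α = ((Fintype.card n : ℂ))⁻¹ • (1 : Matrix n n ℂ) := by
  have hlog : (CFC.log α).IsHermitian := IsSelfAdjoint.log
  rw [← hlog.gibbsState_eq_smul_one_iff, gibbsState_log hα htr]

end Matrix

/-- Generalized thermal iff product-preserving with full-rank states.
A unitary `U` on a bipartite space preserves some full-rank product of density
operators (with at least one factor not maximally mixed) if and only if it maps
some non-interacting Hamiltonian sum (with at least one local Hamiltonian not
proportional to the identity) to a non-interacting Hamiltonian sum. -/
theorem generalizedThermal_iff_productPreserving_fullRank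
    {n m : Type*} [Fintype n] [DecidableEq n] [Nonempty n]
    [Fintype m] [DecidableEq m] [Nonempty m]
    (U : Matrix (n × m) (n × m) ℂ) (hU : U ∈ Matrix.unitaryGroup (n × m) ℂ) :
    (∃ (α α' : Matrix n n ℂ) (β β' : Matrix m m ℂ),
        α.PosDef ∧ β.PosDef ∧ α'.PosDef ∧ β'.PosDef ∧
        α.trace = 1 ∧ β.trace = 1 ∧ α'.trace = 1 ∧ β'.trace = 1 ∧
        (α ≠ ((Fintype.card n : ℂ))⁻¹ • (1 : Matrix n n ℂ) ∨
          β ≠ ((Fintype.card m : ℂ))⁻¹ • (1 : Matrix m m ℂ)) ∧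
        U * (α ⊗ₖ β) * Uᴴ = α' ⊗ₖ β')
    ↔ (∃ (HA HA' : Matrix n n ℂ) (HB HB' : Matrix m m ℂ),
        HA.IsHermitian ∧ HB.IsHermitian ∧ HA'.IsHermitian ∧ HB'.IsHermitian ∧
        ((¬ ∃ c : ℂ, HA = c • (1 : Matrix n n ℂ)) ∨
          (¬ ∃ c : ℂ, HB = c • (1 : Matrix m m ℂ))) ∧
        U * (HA ⊗ₖ (1 : Matrix m m ℂ) + (1 : Matrix n n ℂ) ⊗ₖ HB) * Uᴴ
          = HA' ⊗ₖ (1 : Matrix m m ℂ) + (1 : Matrix n n ℂ) ⊗ₖ HB') := by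
  constructor
  · rintro ⟨α, α', β, β', hα, hβ, hα', hβ', htα, htβ, -, -, hmixed, hprod⟩
    refine ⟨CFC.log α, CFC.log α', CFC.log β, CFC.log β', IsSelfAdjoint.log,
      IsSelfAdjoint.log, IsSelfAdjoint.log, IsSelfAdjoint.log,
      hmixed.imp (mt (hα.exists_log_eq_smul_one_iff htα).1)
        (mt (hβ.exists_log_eq_smul_one_iff htβ).1), ?_⟩
    rw [← log_kronecker hα hβ, ← log_unitary_conj hU (hα.kronecker hβ), hprod,
      log_kronecker hα' hβ']
  · rintro ⟨HA, HA', HB, HB', hA, hB, hA', hB', hnonscalar, hsum⟩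
    refine ⟨gibbsState HA, gibbsState HA', gibbsState HB, gibbsState HB',
      hA.posDef_gibbsState, hB.posDef_gibbsState, hA'.posDef_gibbsState, hB'.posDef_gibbsState,
      hA.trace_gibbsState, hB.trace_gibbsState, hA'.trace_gibbsState, hB'.trace_gibbsState,
      hnonscalar.imp (mt hA.gibbsState_eq_smul_one_iff.1)
        (mt hB.gibbsState_eq_smul_one_iff.1), ?_⟩
    rw [← gibbsState_kroneckerSum, ← gibbsState_unitary_conj hU, hsum, gibbsState_kroneckerSum]
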